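/- Let T and T′ be pretriangulated categories admitting arbitrary (small) coproducts, and let F : T → T′ be a triangulated functor with a right adjoint G : T′ → T. If S is a small weak generator of T and F(S) is small in T′, then G preserves arbitrary coproducts: for every family of objects {A_i}_{i∈I} of T′, the canonical morphism ∐_{i∈I} G(A_i) → G(∐_{i∈I} A_i) is an isomorphism. -/

import Mathlib

/-!
STATEMENT 3: Let `T` and `T′` be pretriangulated categories admitting arbitrary (small)
coproducts, and let `F : T ⥤ T′` be a triangulated functor with a right adjoint `G`.
If `S` is a small weak generator of `T` and `F S` is small in `T′`, then `G` preserves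
arbitrary coproducts: for every family `{Aᵢ}` of objects of `T′`, the canonical morphism
`∐ᵢ G Aᵢ ⟶ G (∐ᵢ Aᵢ)` is an isomorphism.
-/

open CategoryTheory Category Limits Pretriangulated

universe v u

namespace Paper

variable {C : Type u} [Category.{v} C]

/-- The canonical map `⊕ᵢ Hom(G, Aᵢ) →+ Hom(G, ∐ᵢ Aᵢ)`. -/
noncomputable def coproductComparison [Preadditive C] (G : C) {ι : Type v} (A : ι → C)
    [HasCoproduct A] : DirectSum ι (fun i => G ⟶ A i) →+ (G ⟶ ∐ A) :=
  letI := Classical.decEq ι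
  DirectSum.toAddMonoid fun i =>
    AddMonoidHom.mk' (fun g => g ≫ Sigma.ι A i) fun _ _ => Preadditive.add_comp _ _ _ _ _ _

/-- An object `G` is small if for every family of objects admitting a coproduct, the
canonical map `⊕ᵢ Hom(G, Aᵢ) → Hom(G, ∐ᵢ Aᵢ)` is an isomorphism (bijective). -/
def IsSmallObject [Preadditive C] (G : C) : Prop :=
  ∀ ⦃ι : Type v⦄ (A : ι → C) [HasCoproduct A], Function.Bijective (coproductComparison G A)

/-- An object `G` is a weak generator if a map `f : X ⟶ Y` is an isomorphism exactly when
`Hom(G⟦n⟧, X) → Hom(G⟦n⟧, Y)` is bijective for all integers `n`. -/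
def IsWeakGenerator [HasShift C ℤ] (G : C) : Prop :=
  ∀ ⦃X Y : C⦄ (f : X ⟶ Y),
    IsIso f ↔ ∀ n : ℤ, Function.Bijective fun g : G⟦n⟧ ⟶ X => g ≫ f

end Paper

/-!
For every `n`, the adjunction and `F (S⟦n⟧) ≅ (F S)⟦n⟧` give an additive isomorphism
`Hom(S⟦n⟧, G Y) ≅ Hom((F S)⟦n⟧, Y)`, natural in `Y`. Through it, and through the comparison maps
`⊕ Hom(-, Aᵢ) → Hom(-, ∐ Aᵢ)` of the small objects `S⟦n⟧` and `(F S)⟦n⟧`, composition with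
`∐ G Aᵢ ⟶ G (∐ Aᵢ)` on `Hom(S⟦n⟧, -)` becomes a bijection. As `S` is a weak generator, the map is
invertible. Shifts of small objects are small because the shift is an equivalence.
-/

namespace Paper

variable {C D : Type*} [Category.{v} C] [Category.{v} D] [Preadditive C] [Preadditive D]

theorem coproductComparison_of (P : C) {ι : Type v} (A : ι → C) [HasCoproduct A]
    [DecidableEq ι] (i : ι) (g : P ⟶ A i) :
    coproductComparison P A (DirectSum.of _ i g) = g ≫ Sigma.ι A i := by
  unfold coproductComparison
  convert DirectSum.toAddMonoid_of (β := fun i => P ⟶ A i) _ i g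
  rfl

section NaturalHomAddEquiv

variable (H : D ⥤ C) {P : C} {Q : D} (Ψ : ∀ Y : D, (P ⟶ H.obj Y) ≃+ (Q ⟶ Y))
  (hΨ : ∀ {Y Y' : D} (k : Y ⟶ Y') (f : P ⟶ H.obj Y), Ψ Y' (f ≫ H.map k) = Ψ Y f ≫ k)
  {ι : Type v} (A : ι → D) [HasCoproduct A] [HasCoproduct fun i => H.obj (A i)]

include hΨ in
theorem apply_coproductComparison_comp_sigmaDesc [DecidableEq ι]
    (x : DirectSum ι fun i => P ⟶ H.obj (A i)) :
    Ψ (∐ A) (coproductComparison P (fun i => H.obj (A i)) x ≫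
        Sigma.desc fun i => H.map (Sigma.ι A i)) =
      coproductComparison Q A (DFinsupp.mapRange.addEquiv (fun i => Ψ (A i)) x) := by
  induction x using DirectSum.induction_on with
  | zero => simp
  | of i g =>
    rw [coproductComparison_of, assoc, Sigma.ι_desc, hΨ, ← coproductComparison_of]
    congr 1
    exact (DFinsupp.mapRange_single (f := fun i => Ψ (A i)) (hf := fun i => map_zero _)).symm
  | add x y hx hy => simp only [map_add, Preadditive.add_comp, hx, hy]

include hΨ in
theorem bijective_coproductComparison_iff
    (hP : Function.Bijective (coproductComparison P fun i => H.obj (A i))) :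
    Function.Bijective (coproductComparison Q A) ↔
      Function.Bijective fun g : P ⟶ ∐ fun i => H.obj (A i) =>
        g ≫ Sigma.desc fun i => H.map (Sigma.ι A i) := by
  classical
  set β := DFinsupp.mapRange.addEquiv fun i => Ψ (A i)
  have square : ⇑(coproductComparison Q A) ∘ β =
      (Ψ (∐ A) ∘ fun g => g ≫ Sigma.desc fun i => H.map (Sigma.ι A i)) ∘
        coproductComparison P fun i => H.obj (A i) :=
    funext fun x => (apply_coproductComparison_comp_sigmaDesc H Ψ hΨ A x).symm
  rw [← Function.Bijective.of_comp_iff _ β.bijective, square,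
    Function.Bijective.of_comp_iff _ hP, Function.Bijective.of_comp_iff' (Ψ _).bijective]

end NaturalHomAddEquiv

noncomputable def _root_.CategoryTheory.Adjunction.homAddEquivOfIso {F : C ⥤ D} {H : D ⥤ C}
    (adj : F ⊣ H) [F.Additive] {P : C} {Q : D} (e : F.obj P ≅ Q) (Y : D) :
    (P ⟶ H.obj Y) ≃+ (Q ⟶ Y) :=
  AddEquiv.mk' ((adj.homEquiv P Y).symm.trans e.homFromEquiv) fun f g => by
    simp [Adjunction.homEquiv_counit]

theorem _root_.CategoryTheory.Adjunction.homAddEquivOfIso_naturality {F : C ⥤ D} {H : D ⥤ C}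
    (adj : F ⊣ H) [F.Additive] {P : C} {Q : D} (e : F.obj P ≅ Q) {Y Y' : D} (k : Y ⟶ Y')
    (f : P ⟶ H.obj Y) :
    adj.homAddEquivOfIso e Y' (f ≫ H.map k) = adj.homAddEquivOfIso e Y f ≫ k := by
  simp [Adjunction.homAddEquivOfIso, AddEquiv.mk', Adjunction.homEquiv_counit]

theorem isSmallObject_shift [HasShift C ℤ] [∀ n : ℤ, (shiftFunctor C n).Additive]
    [HasCoproducts.{v} C] {P : C} (hP : IsSmallObject P) (n : ℤ) : IsSmallObject (P⟦n⟧) := by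
  intro ι A _
  let adj : shiftFunctor C n ⊣ shiftFunctor C (-n) := (shiftEquiv C n).toAdjunction
  rw [bijective_coproductComparison_iff _ (adj.homAddEquivOfIso (Iso.refl _))
    (adj.homAddEquivOfIso_naturality _) A (hP _)]
  exact (asIso (sigmaComparison (shiftFunctor C (-n)) A)).homToEquiv.bijective

end Paper

open Paper

theorem statement_3
    {C : Type u} [Category.{v} C] [HasZeroObject C] [HasShift C ℤ] [Preadditive C]
    [∀ n : ℤ, (shiftFunctor C n).Additive] [Pretriangulated C] [HasCoproducts.{v} C]
    {D : Type u} [Category.{v} D] [HasZeroObject D] [HasShift D ℤ] [Preadditive D]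
    [∀ n : ℤ, (shiftFunctor D n).Additive] [Pretriangulated D] [HasCoproducts.{v} D]
    (F : C ⥤ D) [F.Additive] [F.CommShift ℤ] [F.IsTriangulated]
    (G : D ⥤ C) (adj : F ⊣ G)
    (S : C) (hS_small : IsSmallObject S) (hS_gen : IsWeakGenerator S)
    (hFS_small : IsSmallObject (F.obj S)) :
    ∀ ⦃ι : Type v⦄ (A : ι → D),
      IsIso (Sigma.desc (fun i => G.map (Sigma.ι A i)) : (∐ fun i => G.obj (A i)) ⟶ G.obj (∐ A)) := by
  intro ι A
  rw [hS_gen]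
  intro n
  let e : F.obj (S⟦n⟧) ≅ (F.obj S)⟦n⟧ := (F.commShiftIso n).app S
  exact (bijective_coproductComparison_iff G (adj.homAddEquivOfIso e)
    (adj.homAddEquivOfIso_naturality e) A (isSmallObject_shift hS_small n _)).mp
    (isSmallObject_shift hFS_small n A)
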